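/- arXiv:2001.06868 — 4 statements merged into one kernel-verified Lean document; each statement's English description precedes it below -/
import Mathlib

section
/- Let ψ : [0,a] → X be a C¹ solution of ψ'(t) = A ψ(t) + f(t) on [0,a] (with A a bounded operator on a Banach space X and f continuous), satisfying the boundary condition ψ(0) − α ψ(a) = 0 for a scalar α ∈ ℂ. If the operator 1 − α e^{aA} is invertible, then ψ(t) = ∫₀ᵗ e^{(t−s)A} f(s) ds + e^{tA} (1 − α e^{aA})⁻¹ α ∫₀ᵃ e^{(a−s)A} f(s) ds for all t ∈ [0,a]. -/
open Set

section Aux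

variable {X : Type*} [NormedAddCommGroup X] [NormedSpace ℂ X] [CompleteSpace X]

/-- Auxiliary: the operator exponential flow `s ↦ e^{sA}`. -/
noncomputable def expFlow (A : X →L[ℂ] X) (s : ℝ) : X →L[ℂ] X :=
  NormedSpace.exp ((s : ℂ) • A)

theorem expFlow_hasDerivAt (A : X →L[ℂ] X) (t : ℝ) :
    HasDerivAt (expFlow A) (expFlow A t * A) t := by
  have h := hasDerivAt_exp_smul_const (𝕂 := ℂ) A (t : ℂ)
  have hr : HasDerivAt (fun y : ℝ => (y : ℂ)) 1 t := by
    simpa using (hasDerivAt_id t).ofReal_comp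
  rw [show expFlow A = fun s : ℝ => NormedSpace.exp ((s : ℂ) • A) from rfl]
  simpa [expFlow, Function.comp_def] using h.scomp_of_eq t hr rfl

theorem expFlow_continuous (A : X →L[ℂ] X) : Continuous (expFlow A) :=
  continuous_iff_continuousAt.mpr fun t => (expFlow_hasDerivAt A t).continuousAt

theorem expFlow_mul (A : X →L[ℂ] X) (s u : ℝ) :
    expFlow A s * expFlow A u = expFlow A (s + u) := by
  have hc : Commute ((s : ℂ) • A) ((u : ℂ) • A) :=
    ((Commute.refl A).smul_left _).smul_right _
  rw [expFlow, expFlow, expFlow, ← NormedSpace.exp_add_of_commute_of_mem_ball (𝕂 := ℂ) hc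
    (by simp [NormedSpace.expSeries_radius_eq_top]) (by simp [NormedSpace.expSeries_radius_eq_top])]
  congr 1
  push_cast
  rw [add_smul]

theorem expFlow_zero (A : X →L[ℂ] X) : expFlow A 0 = 1 := by
  simp [expFlow, NormedSpace.exp_zero]

theorem expFlow_mul_neg (A : X →L[ℂ] X) (s : ℝ) :
    expFlow A s * expFlow A (-s) = 1 := by
  rw [expFlow_mul]
  simp [expFlow_zero]

end Aux

/-- Explicit solution formula for the phase-shifted periodic problem. -/
theorem stmt_2 {X : Type*} [NormedAddCommGroup X] [NormedSpace ℂ X] [CompleteSpace X]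
    (A : X →L[ℂ] X) (a : ℝ) (ha : 0 < a) (f : ℝ → X) (hf : ContinuousOn f (Icc 0 a))
    (α : ℂ) (ψ : ℝ → X)
    (hψ : ∀ t ∈ Icc (0 : ℝ) a, HasDerivWithinAt ψ (A (ψ t) + f t) (Icc 0 a) t)
    (hbc : ψ 0 - α • ψ a = 0)
    (C : X →L[ℂ] X)
    (hC1 : (1 - α • NormedSpace.exp ((a : ℂ) • A)) * C = 1)
    (hC2 : C * (1 - α • NormedSpace.exp ((a : ℂ) • A)) = 1) :
    ∀ t ∈ Icc (0 : ℝ) a,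
      ψ t = (∫ s in (0 : ℝ)..t, NormedSpace.exp (((t - s : ℝ) : ℂ) • A) (f s)) +
        NormedSpace.exp ((t : ℂ) • A)
          (C (α • ∫ s in (0 : ℝ)..a, NormedSpace.exp (((a - s : ℝ) : ℂ) • A) (f s))) := by
  set E : ℝ → (X →L[ℂ] X) := expFlow A with hEdef
  -- the function φ s = e^{-sA} ψ s
  set φ : ℝ → X := fun s => E (-s) (ψ s) with hφdef
  have hφderiv : ∀ s ∈ Icc (0 : ℝ) a,
      HasDerivWithinAt φ (E (-s) (f s)) (Icc 0 a) s := by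
    intro s hs
    have hEn : HasDerivAt (fun u : ℝ => E (-u)) ((-1 : ℝ) • (E (-s) * A)) s := by
      have hneg : HasDerivAt (fun u : ℝ => -u) (-1 : ℝ) s := hasDerivAt_neg' s
      simpa [Function.comp_def] using (expFlow_hasDerivAt A (-s)).scomp_of_eq s hneg rfl
    set L : (X →L[ℂ] X) →L[ℝ] (X →L[ℝ] X) :=
      ContinuousLinearMap.restrictScalarsL ℂ X X ℝ ℝ with hLdef
    have hEnr : HasDerivAt (fun u : ℝ => L (E (-u))) (L ((-1 : ℝ) • (E (-s) * A))) s :=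
      L.hasFDerivAt.comp_hasDerivAt s hEn
    have h2 := hEnr.hasDerivWithinAt.clm_apply (hψ s hs)
    have h3 : (L ((-1 : ℝ) • (E (-s) * A))) (ψ s) + (L (E (-s))) (A (ψ s) + f s)
        = E (-s) (f s) := by
      have e1 : (L ((-1 : ℝ) • (E (-s) * A))) (ψ s) = -(E (-s) (A (ψ s))) := by
        show (((-1 : ℝ) • (E (-s) * A)).restrictScalars ℝ) (ψ s) = _
        rw [ContinuousLinearMap.coe_restrictScalars']
        simp [ContinuousLinearMap.mul_apply]
      have e2 : (L (E (-s))) (A (ψ s) + f s) = E (-s) (A (ψ s)) + E (-s) (f s) := by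
        show ((E (-s)).restrictScalars ℝ) (A (ψ s) + f s) = _
        rw [ContinuousLinearMap.coe_restrictScalars']
        exact map_add _ _ _
      rw [e1, e2]
      abel
    rw [h3] at h2
    exact h2
  have hφcont : ContinuousOn φ (Icc 0 a) := fun s hs => (hφderiv s hs).continuousWithinAt
  -- integrability of the integrand
  have hint : ∀ b ∈ Icc (0 : ℝ) a,
      IntervalIntegrable (fun s => E (-s) (f s)) MeasureTheory.volume 0 b := by
    intro b hb
    apply ContinuousOn.intervalIntegrable
    have hsub : uIcc (0 : ℝ) b ⊆ Icc 0 a := by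
      rw [uIcc_of_le hb.1]; exact Icc_subset_Icc le_rfl hb.2
    exact ContinuousOn.clm_apply
      (((expFlow_continuous A).comp continuous_neg).continuousOn) (hf.mono hsub)
  -- variation of constants via FTC
  have key : ∀ b ∈ Icc (0 : ℝ) a, φ b = ψ 0 + ∫ s in (0 : ℝ)..b, E (-s) (f s) := by
    intro b hb
    have h := intervalIntegral.integral_eq_sub_of_hasDeriv_right_of_le hb.1
      (hφcont.mono (Icc_subset_Icc le_rfl hb.2))
      (fun x hx => by
        have hx' : Icc (0 : ℝ) a ∈ nhds x :=
          Icc_mem_nhds hx.1 (lt_of_lt_of_le hx.2 hb.2)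
        exact ((hφderiv x ⟨hx.1.le, (hx.2.trans_le hb.2).le⟩).hasDerivAt hx').hasDerivWithinAt)
      (hint b hb)
    have hφ0 : φ 0 = ψ 0 := by
      simp [hφdef, hEdef, neg_zero, expFlow_zero]
    rw [hφ0] at h
    rw [h]
    abel
  -- ψ b = E b (ψ 0) + ∫₀ᵇ E (b - s) f s
  have hψrep : ∀ b ∈ Icc (0 : ℝ) a,
      ψ b = E b (ψ 0) + ∫ s in (0 : ℝ)..b, E (b - s) (f s) := by
    intro b hb
    have h1 : ψ b = E b (φ b) := by
      have : E b (E (-b) (ψ b)) = (E b * E (-b)) (ψ b) := rfl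
      rw [hφdef]
      simp only
      rw [this, hEdef, expFlow_mul_neg]
      simp
    rw [h1, key b hb, map_add]
    congr 1
    rw [← ContinuousLinearMap.intervalIntegral_comp_comm _ (hint b hb)]
    apply intervalIntegral.integral_congr
    intro s _
    show E b (E (-s) (f s)) = E (b - s) (f s)
    have : E b * E (-s) = E (b - s) := by
      rw [hEdef, expFlow_mul]; norm_num [sub_eq_add_neg]
    rw [← this]
    rfl
  -- determine ψ 0 from the boundary condition
  have hbc' : ψ 0 = α • ψ a := by rwa [sub_eq_zero] at hbc
  have ha' := hψrep a ⟨ha.le, le_rfl⟩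
  set J := ∫ s in (0 : ℝ)..a, E (a - s) (f s) with hJ
  have h2 : ψ 0 = α • E a (ψ 0) + α • J := by
    conv_lhs => rw [hbc', ha']
    rw [smul_add]
  have h1 : (1 - α • E a) (ψ 0) = α • J := by
    have h3 : ψ 0 - α • E a (ψ 0) = α • J := by
      rw [sub_eq_iff_eq_add]
      conv_lhs => rw [h2]
      exact add_comm _ _
    simpa [ContinuousLinearMap.sub_apply, ContinuousLinearMap.smul_apply,
      ContinuousLinearMap.one_apply] using h3
  have hEa : E a = NormedSpace.exp ((a : ℂ) • A) := rfl
  have hψ0 : ψ 0 = C (α • J) := by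
    have h4 : C ((1 - α • E a) (ψ 0)) = ψ 0 := by
      rw [← ContinuousLinearMap.mul_apply, hEa, hC2, ContinuousLinearMap.one_apply]
    rw [← h4, h1]
  -- conclude
  intro t ht
  rw [hψrep t ht, hψ0, add_comm]
  rfl
end

section
/- Let K be a complex Hilbert space, A a self-adjoint bounded operator on K, a > 0, and B a self-adjoint bounded operator on K commuting with e^{iaA}, such that 1 − B e^{iaA} is boundedly invertible. Define S(t) := e^{itA}(1 − B e^{iaA})⁻¹ for t ∈ ℝ. Then S(t) is unitary for all t if and only if B² = 2B cos(aA), where cos(aA) = (e^{iaA} + e^{−iaA})/2. -/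
open NormedSpace

lemma aux_exp_unitary {K : Type*} [NormedAddCommGroup K] [InnerProductSpace ℂ K] [CompleteSpace K]
    (A : K →L[ℂ] K) (hA : IsSelfAdjoint A) (t : ℝ) :
    exp (((t : ℂ) * Complex.I) • A) ∈ unitary (K →L[ℂ] K) := by
  letI : NormedAlgebra ℚ (K →L[ℂ] K) := .restrictScalars ℚ ℂ (K →L[ℂ] K)
  apply exp_mem_unitary_of_mem_skewAdjoint
  rw [skewAdjoint.mem_iff, star_smul, hA.star_eq, ← neg_smul]
  congr 1
  simp [Complex.ext_iff]

/-- Unitarity of the Schrödinger time-graph solution operators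
`S(t) = e^{itA}(1 - B e^{iaA})⁻¹` is equivalent to `B² = 2B cos(aA)`. -/
theorem stmt_6 {K : Type*} [NormedAddCommGroup K] [InnerProductSpace ℂ K] [CompleteSpace K]
    (A B : K →L[ℂ] K) (hA : IsSelfAdjoint A) (hB : IsSelfAdjoint B) (a : ℝ) (ha : 0 < a)
    (hcomm : Commute B (NormedSpace.exp (((a : ℂ) * Complex.I) • A)))
    (C : K →L[ℂ] K)
    (hC1 : (1 - B * NormedSpace.exp (((a : ℂ) * Complex.I) • A)) * C = 1)
    (hC2 : C * (1 - B * NormedSpace.exp (((a : ℂ) * Complex.I) • A)) = 1) :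
    (∀ t : ℝ, NormedSpace.exp (((t : ℂ) * Complex.I) • A) * C ∈ unitary (K →L[ℂ] K)) ↔
      B ^ 2 = B * (NormedSpace.exp (((a : ℂ) * Complex.I) • A) +
        NormedSpace.exp (-((a : ℂ) * Complex.I) • A)) := by
  set E : K →L[ℂ] K := exp (((a : ℂ) * Complex.I) • A) with hEdef
  set E' : K →L[ℂ] K := exp (-((a : ℂ) * Complex.I) • A) with hE'def
  letI : NormedAlgebra ℚ (K →L[ℂ] K) := .restrictScalars ℚ ℂ (K →L[ℂ] K)
  have hEE' : E * E' = 1 := by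
    rw [hEdef, hE'def, neg_smul, ← exp_add_of_commute (Commute.refl _).neg_right]
    simp
  have hE'E : E' * E = 1 := by
    rw [hEdef, hE'def, neg_smul, ← exp_add_of_commute (Commute.refl _).neg_left]
    simp
  have hstarE : star E = E' := by
    rw [hEdef, hE'def, star_exp, star_smul, hA.star_eq]
    congr 2
    simp [Complex.ext_iff]
  have hBE : B * E = E * B := hcomm
  have hBE' : B * E' = E' * B := by
    calc B * E' = (E' * E) * (B * E') := by rw [hE'E, one_mul]
      _ = E' * ((E * B) * E') := by noncomm_ring
      _ = E' * ((B * E) * E') := by rw [← hBE]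
      _ = E' * (B * (E * E')) := by rw [mul_assoc]
      _ = E' * B := by rw [hEE', mul_one]
  have hz1 : E' * B * (B * E) = B ^ 2 := by
    calc E' * B * (B * E) = B * E' * (B * E) := by rw [← hBE']
      _ = B * (E' * B * E) := by noncomm_ring
      _ = B * (B * E' * E) := by rw [← hBE']
      _ = B * (B * (E' * E)) := by rw [mul_assoc]
      _ = B ^ 2 := by rw [hE'E, mul_one, sq]
  have hz2 : B * E * (E' * B) = B ^ 2 := by
    calc B * E * (E' * B) = B * (E * E' * B) := by noncomm_ring
      _ = B ^ 2 := by rw [hEE', one_mul, sq]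
  have expand1 : (1 - E' * B) * (1 - B * E) = 1 - E' * B - B * E + B ^ 2 := by
    rw [← hz1]; noncomm_ring
  have expand2 : (1 - B * E) * (1 - E' * B) = 1 - B * E - E' * B + B ^ 2 := by
    rw [← hz2]; noncomm_ring
  have hstarD : star ((1 : K →L[ℂ] K) - B * E) = 1 - E' * B := by
    rw [star_sub, star_one, star_mul, hstarE, hB.star_eq]
  constructor
  · intro h
    have h0 := h 0
    simp only [Complex.ofReal_zero, zero_mul, zero_smul, exp_zero, one_mul] at h0
    rw [Unitary.mem_iff] at h0
    have hD : (1 : K →L[ℂ] K) - B * E = star C := by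
      calc (1 : K →L[ℂ] K) - B * E = ((1 - B * E) * C) * star C := by
            rw [mul_assoc, h0.2, mul_one]
        _ = star C := by rw [hC1, one_mul]
    have key : (1 - E' * B) * (1 - B * E) = 1 := by
      rw [← hstarD, hD, star_star]
      exact h0.2
    rw [expand1] at key
    have key2 : B ^ 2 = E' * B + B * E := by
      have h' : B ^ 2 - (E' * B + B * E) = 0 := by
        calc B ^ 2 - (E' * B + B * E) = (1 - E' * B - B * E + B ^ 2) - 1 := by abel
          _ = 0 := by rw [key]; exact sub_self 1
      exact sub_eq_zero.mp h'
    rw [key2, mul_add, hBE']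
    abel
  · intro hB2
    have keyA : (1 - E' * B) * (1 - B * E) = 1 := by
      rw [expand1, hB2, mul_add, hBE']
      abel
    have keyB : (1 - B * E) * (1 - E' * B) = 1 := by
      rw [expand2, hB2, mul_add, hBE']
      abel
    have hCstar : C = star ((1 : K →L[ℂ] K) - B * E) := by
      calc C = C * ((1 - B * E) * (1 - E' * B)) := by rw [keyB, mul_one]
        _ = (C * (1 - B * E)) * (1 - E' * B) := by rw [mul_assoc]
        _ = 1 - E' * B := by rw [hC2, one_mul]
        _ = star ((1 : K →L[ℂ] K) - B * E) := hstarD.symm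
    have hCuni : C ∈ unitary (K →L[ℂ] K) := by
      rw [Unitary.mem_iff, hCstar, star_star, hstarD]
      exact ⟨keyB, keyA⟩
    intro t
    exact mul_mem (aux_exp_unitary A hA t) hCuni
end

section
/- Let K be a complex Hilbert space, A self-adjoint bounded on K, a > 0, and B an invertible self-adjoint bounded operator commuting with e^{iaA} with 1 − B e^{iaA} invertible. Then the solution operators S(t) = e^{itA}(1 − B e^{iaA})⁻¹ are unitary if and only if B = 2 cos(aA). -/
/-- For invertible self-adjoint `B`, unitarity of the Schrödinger time-graph solution
operators is equivalent to `B = 2 cos(aA) = e^{iaA} + e^{-iaA}`. -/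
theorem stmt_7 {K : Type*} [NormedAddCommGroup K] [InnerProductSpace ℂ K] [CompleteSpace K]
    (A B : K →L[ℂ] K) (hA : IsSelfAdjoint A) (hB : IsSelfAdjoint B) (hBinv : IsUnit B)
    (a : ℝ) (ha : 0 < a)
    (hcomm : Commute B (NormedSpace.exp (((a : ℂ) * Complex.I) • A)))
    (C : K →L[ℂ] K)
    (hC1 : (1 - B * NormedSpace.exp (((a : ℂ) * Complex.I) • A)) * C = 1)
    (hC2 : C * (1 - B * NormedSpace.exp (((a : ℂ) * Complex.I) • A)) = 1) :
    (∀ t : ℝ, NormedSpace.exp (((t : ℂ) * Complex.I) • A) * C ∈ unitary (K →L[ℂ] K)) ↔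
      B = NormedSpace.exp (((a : ℂ) * Complex.I) • A) +
        NormedSpace.exp (-((a : ℂ) * Complex.I) • A) := by
  let +nondep : NormedAlgebra ℚ (K →L[ℂ] K) := .restrictScalars ℚ ℂ (K →L[ℂ] K)
  set U : K →L[ℂ] K := NormedSpace.exp (((a : ℂ) * Complex.I) • A) with hU
  set V : K →L[ℂ] K := NormedSpace.exp (-((a : ℂ) * Complex.I) • A) with hV
  -- star of the exponent
  have hstarx : ∀ t : ℝ, star ((((t : ℂ)) * Complex.I) • A) = -(((t : ℂ) * Complex.I) • A) := by
    intro t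
    rw [star_smul, hA.star_eq, ← neg_smul]
    congr 1
    simp [Complex.star_def, map_mul, Complex.conj_ofReal, Complex.conj_I]
  have hskew : ∀ t : ℝ, (((t : ℂ)) * Complex.I) • A ∈ skewAdjoint (K →L[ℂ] K) := fun t =>
    skewAdjoint.mem_iff.mpr (hstarx t)
  have hUnit : ∀ t : ℝ, NormedSpace.exp (((t : ℂ) * Complex.I) • A) ∈ unitary (K →L[ℂ] K) :=
    fun t => NormedSpace.exp_mem_unitary_of_mem_skewAdjoint (hskew t)
  have hUmem : U ∈ unitary (K →L[ℂ] K) := hUnit a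
  have hns : (-((a : ℂ) * Complex.I)) • A = -(((a : ℂ) * Complex.I) • A) := neg_smul _ _
  have hVstar : star U = V := by
    rw [hU, hV, NormedSpace.star_exp, hstarx a, hns]
  have hVmem : V ∈ unitary (K →L[ℂ] K) := hVstar ▸ Unitary.star_mem hUmem
  have hUV : U * V = 1 := by
    rw [hU, hV, hns, ← NormedSpace.exp_add_of_commute ((Commute.refl _).neg_right)]
    simp
  have hVU : V * U = 1 := by
    rw [hU, hV, hns, ← NormedSpace.exp_add_of_commute ((Commute.refl _).neg_left)]
    simp
  -- B commutes with V
  have hcommV : Commute B V := by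
    have := congrArg star hcomm.eq
    rw [star_mul, star_mul, hB.star_eq, hVstar] at this
    exact this.symm
  constructor
  · intro h
    -- C is unitary
    have hCmem : C ∈ unitary (K →L[ℂ] K) := by
      have h0 := h 0
      simpa using h0
    -- D = 1 - B*U equals star C, hence unitary
    have hD : (1 - B * U) = star C := by
      calc (1 - B * U) = (1 - B * U) * (C * star C) := by
            rw [(Unitary.mem_iff.mp hCmem).2, mul_one]
        _ = ((1 - B * U) * C) * star C := by rw [mul_assoc]
        _ = star C := by rw [hC1, one_mul]
    have hDD : (1 - B * U) * star (1 - B * U) = 1 := by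
      rw [hD, star_star]
      exact (Unitary.mem_iff.mp hCmem).1
    have hstarD : star (1 - B * U) = 1 - B * V := by
      rw [star_sub, star_one, star_mul, hB.star_eq, hVstar, hcommV.eq]
    rw [hstarD] at hDD
    have key : (1 - B * U) * (1 - B * V) = 1 - B * (U + V) + B * B := by
      have e1 : (B * U) * (B * V) = B * B := by
        rw [mul_assoc, ← mul_assoc U B V, ← hcomm.eq, mul_assoc, ← mul_assoc,
          mul_assoc B B, hUV, mul_one]
      calc (1 - B * U) * (1 - B * V)
          = 1 - B * V - B * U + (B * U) * (B * V) := by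
            rw [sub_mul, mul_sub, mul_sub, one_mul, one_mul, mul_one]
            abel
        _ = 1 - B * (U + V) + B * B := by rw [e1, mul_add]; abel
    rw [key] at hDD
    have h6 : B * B = B * (U + V) := by
      calc B * B = (1 - B * (U + V) + B * B) - 1 + B * (U + V) := by abel
        _ = B * (U + V) := by rw [hDD]; abel
    exact hBinv.mul_left_cancel h6
  · intro hBeq
    -- then 1 - B*U = -(U*U) and C = -(V*V)
    have hDval : (1 - B * U) = -(U * U) := by
      rw [hBeq, add_mul, hVU]
      abel
    have hCval : C = -(V * V) := by
      have : (1 - B * U) * (-(V * V)) = 1 := by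
        rw [hDval, neg_mul_neg, mul_assoc, ← mul_assoc U V V, hUV, one_mul, hUV]
      calc C = C * ((1 - B * U) * (-(V * V))) := by rw [this, mul_one]
        _ = (C * (1 - B * U)) * (-(V * V)) := by rw [mul_assoc]
        _ = -(V * V) := by rw [hC2, one_mul]
    intro t
    rw [hCval]
    have hVV : V * V ∈ unitary (K →L[ℂ] K) := mul_mem hVmem hVmem
    have hnVV : -(V * V) ∈ unitary (K →L[ℂ] K) := by
      rw [Unitary.mem_iff] at hVV ⊢
      simpa using hVV
    exact mul_mem (hUnit t) hnVV
end

section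
/- Fix a = 1 and let the boundary operator be B = 1 (fixed jump condition). For A a self-adjoint bounded operator on a complex Hilbert space K with e^{iA} commuting with 1, the solution operator S(t) = e^{itA}(1 − e^{iaA})⁻¹ of the time-graph Schrödinger problem is unitary for all t if and only if the spectrum of aA is contained in π/3 + 2πℤ, i.e. e^{iaA} + e^{−iaA} = 1 as operators. -/
open NormedSpace

lemma star_exp_smul {K : Type*} [NormedAddCommGroup K] [InnerProductSpace ℂ K] [CompleteSpace K]
    (A : K →L[ℂ] K) (hA : IsSelfAdjoint A) (c : ℂ) :
    star (exp (c • A)) = exp ((starRingEnd ℂ c) • A) := by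
  rw [star_exp, star_smul, hA.star_eq]
  rfl

lemma exp_smul_mul_exp_smul {K : Type*} [NormedAddCommGroup K] [InnerProductSpace ℂ K]
    [CompleteSpace K] (A : K →L[ℂ] K) (c d : ℂ) :
    exp (c • A) * exp (d • A) = exp ((c + d) • A) := by
  let +nondep : NormedAlgebra ℚ (K →L[ℂ] K) := .restrictScalars ℚ ℂ (K →L[ℂ] K)
  rw [add_smul, exp_add_of_commute]
  exact ((Commute.refl A).smul_left c).smul_right d

/-- For `a = 1` and fixed jump condition `B = 1`, the solution operators
`S(t) = e^{itA}(1 - e^{iA})⁻¹` are unitary iff `e^{iA} + e^{-iA} = 1`. -/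
theorem stmt_8 {K : Type*} [NormedAddCommGroup K] [InnerProductSpace ℂ K] [CompleteSpace K]
    (A : K →L[ℂ] K) (hA : IsSelfAdjoint A)
    (C : K →L[ℂ] K)
    (hC1 : (1 - NormedSpace.exp (Complex.I • A)) * C = 1)
    (hC2 : C * (1 - NormedSpace.exp (Complex.I • A)) = 1) :
    (∀ t : ℝ, NormedSpace.exp (((t : ℂ) * Complex.I) • A) * C ∈ unitary (K →L[ℂ] K)) ↔
      NormedSpace.exp (Complex.I • A) + NormedSpace.exp (-Complex.I • A) = 1 := by
  set E := exp (Complex.I • A) with hE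
  set E' := exp (-Complex.I • A) with hE'
  have hstarE : star E = E' := by
    rw [hE, star_exp_smul A hA, hE']
    congr 1
    simp [Complex.conj_I]
  have hstarE' : star E' = E := by rw [← hstarE, star_star]
  have hEE' : E * E' = 1 := by
    rw [hE, hE', exp_smul_mul_exp_smul]; simp
  have expand : (1 - E) * (1 - E') = 1 - E - E' + E * E' := by noncomm_ring
  constructor
  · intro h
    have h0 := h 0
    have h00 : (((0:ℝ) : ℂ) * Complex.I) • A = 0 := by norm_num
    rw [h00, NormedSpace.exp_zero, one_mul] at h0
    have hsC : star C * C = 1 := h0.1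
    have hstC : star C = 1 - E := by
      calc star C = star C * (C * (1 - E)) := by rw [hC2, mul_one]
        _ = (star C * C) * (1 - E) := by rw [mul_assoc]
        _ = 1 - E := by rw [hsC, one_mul]
    have hCval : C = 1 - E' := by
      have := congrArg star hstC
      rwa [star_star, star_sub, star_one, hstarE] at this
    rw [hCval, expand, hEE'] at hC1
    calc E + E' = 1 + 1 - (1 - E - E' + 1) := by abel
      _ = 1 + 1 - 1 := by rw [hC1]
      _ = 1 := by abel
  · intro hsum
    have hDE : (1 - E) * (1 - E') = 1 := by
      rw [expand, hEE']
      calc 1 - E - E' + 1 = 1 + 1 - (E + E') := by abel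
        _ = 1 := by rw [hsum]; abel
    have hCval : C = 1 - E' := by
      calc C = C * ((1 - E) * (1 - E')) := by rw [hDE, mul_one]
        _ = (C * (1 - E)) * (1 - E') := by rw [mul_assoc]
        _ = 1 - E' := by rw [hC2, one_mul]
    have hstC : star C = 1 - E := by
      rw [hCval, star_sub, star_one, hstarE']
    have hCunit : C ∈ unitary (K →L[ℂ] K) := by
      constructor
      · rw [hstC]; exact hC1
      · rw [hstC]; exact hC2
    intro t
    have hUt : exp (((t : ℂ) * Complex.I) • A) ∈ unitary (K →L[ℂ] K) := by
      have hst : star (exp (((t : ℂ) * Complex.I) • A))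
          = exp ((-((t:ℂ) * Complex.I)) • A) := by
        rw [star_exp_smul A hA]
        congr 2
        simp [Complex.conj_I]
      constructor
      · rw [hst, exp_smul_mul_exp_smul]; simp
      · rw [hst, exp_smul_mul_exp_smul]; simp
    exact mul_mem hUt hCunit
end
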